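/- arXiv:2511.11034 — 2 statements merged into one kernel-verified Lean document; each statement's English description precedes it below -/
import Mathlib

section
/- Let H be a finite nonempty hypothesis class where each hypothesis h has a measurable loss L_h : X → [0,1], let μ be a probability measure on X, and let R(h) = ∫ L_h dμ be the true risk and R̂(h) = (1/n) ∑_{i=1}^n L_h(x_i) the empirical risk on an i.i.d. sample x_1,…,x_n ~ μ. Then for every t > 0, the probability (under the product measure μ^⊗n) that there exists h ∈ H with |R̂(h) − R(h)| > t is at most 2·|H|·exp(−2 n t²). -/
open MeasureTheory

open Real ProbabilityTheory


lemma hoeff_core (p : ℝ) (hp0 : 0 ≤ p) (hp1 : p ≤ 1) (l : ℝ) :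
    Real.exp (-(l * p)) * (1 - p + p * Real.exp l) ≤ Real.exp (l ^ 2 / 8) := by
  have hg : ∀ x : ℝ, 0 < 1 - p + p * Real.exp x := by
    intro x
    rcases eq_or_lt_of_le hp1 with h | h
    · rw [← h]; have := exp_pos x; nlinarith
    · have := mul_nonneg hp0 (exp_pos x).le; linarith
  set f : ℝ → ℝ := fun l => l ^ 2 / 8 + p * l - Real.log (1 - p + p * Real.exp l) with hf
  set f1 : ℝ → ℝ := fun l => l / 4 + p - p * Real.exp l / (1 - p + p * Real.exp l) with hf1
  have hg' : ∀ x : ℝ, HasDerivAt (fun l => 1 - p + p * Real.exp l) (p * Real.exp x) x := by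
    intro x
    exact ((Real.hasDerivAt_exp x).const_mul p).const_add (1 - p)
  have hfd : ∀ x : ℝ, HasDerivAt f (f1 x) x := by
    intro x
    have h1 : HasDerivAt (fun l : ℝ => l ^ 2 / 8 + p * l)
        ((2 * x ^ 1) / 8 + p * 1) x :=
      ((hasDerivAt_pow 2 x).div_const 8).add ((hasDerivAt_id x).const_mul p)
    have h2 := (hg' x).log (hg x).ne'
    have := h1.sub h2
    convert this using 1
    · rfl
    · rfl
    · rfl
    simp [hf1]; ring
  have hf1d : ∀ x : ℝ, HasDerivAt f1
      (1/4 - (p * Real.exp x * (1 - p + p * Real.exp x) -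
        p * Real.exp x * (p * Real.exp x)) / (1 - p + p * Real.exp x) ^ 2) x := by
    intro x
    have h1 : HasDerivAt (fun l : ℝ => l / 4 + p) (1 / 4) x := by
      simpa using ((hasDerivAt_id x).div_const 4).add_const p
    have h2 : HasDerivAt (fun l => p * Real.exp l) (p * Real.exp x) x :=
      (Real.hasDerivAt_exp x).const_mul p
    exact h1.sub (h2.div (hg' x) (hg x).ne')
  have hf1mono : Monotone f1 := by
    apply monotone_of_deriv_nonneg (fun x => (hf1d x).differentiableAt)
    intro x
    rw [(hf1d x).deriv]
    have hgx := hg x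
    rw [sub_nonneg, div_le_iff₀ (by positivity)]
    nlinarith [sq_nonneg (1 - p - p * Real.exp x), exp_pos x]
  have hf10 : f1 0 = 0 := by
    have : (1:ℝ) - p + p * Real.exp 0 = 1 := by simp
    simp [hf1, this]
  have hf0 : f 0 = 0 := by
    have : (1:ℝ) - p + p * Real.exp 0 = 1 := by simp
    simp [hf, this]
  have hfnonneg : ∀ x : ℝ, 0 ≤ f x := by
    intro x
    rcases le_or_gt 0 x with hx | hx
    · have hmono : MonotoneOn f (Set.Ici 0) := by
        apply monotoneOn_of_deriv_nonneg (convex_Ici 0)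
          (fun y _ => ((hfd y).differentiableAt).continuousAt.continuousWithinAt)
          (fun y _ => ((hfd y).differentiableAt).differentiableWithinAt)
        intro y hy
        rw [(hfd y).deriv, ← hf10]
        exact hf1mono (le_of_lt (by simpa using hy))
      have := hmono (Set.self_mem_Ici) (Set.mem_Ici.2 hx) hx
      linarith [hf0 ▸ this]
    · have hanti : AntitoneOn f (Set.Iic 0) := by
        apply antitoneOn_of_deriv_nonpos (convex_Iic 0)
          (fun y _ => ((hfd y).differentiableAt).continuousAt.continuousWithinAt)
          (fun y _ => ((hfd y).differentiableAt).differentiableWithinAt)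
        intro y hy
        rw [(hfd y).deriv, ← hf10]
        exact hf1mono (le_of_lt (by simpa using hy))
      have := hanti (Set.mem_Iic.2 hx.le) (Set.self_mem_Iic) hx.le
      linarith [hf0 ▸ this]
  have key := hfnonneg l
  have hlog : Real.log (1 - p + p * Real.exp l) ≤ l ^ 2 / 8 + p * l := by
    simp only [hf] at key; linarith
  have := Real.exp_le_exp.2 hlog
  rw [Real.exp_log (hg l)] at this
  calc Real.exp (-(l * p)) * (1 - p + p * Real.exp l)
      ≤ Real.exp (-(l * p)) * Real.exp (l ^ 2 / 8 + p * l) := by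
        exact mul_le_mul_of_nonneg_left this (exp_pos _).le
    _ = Real.exp (l ^ 2 / 8) := by rw [← Real.exp_add]; ring_nf

lemma bdd_integrable {X : Type*} [MeasurableSpace X] (ν : Measure X) [IsProbabilityMeasure ν]
    {g : X → ℝ} (hg : Measurable g) {C : ℝ} (hC : ∀ x, |g x| ≤ C) :
    Integrable g ν :=
  Integrable.mono' (integrable_const C) hg.aestronglyMeasurable (Filter.Eventually.of_forall hC)

lemma mgf_le_of_Icc {X : Type*} [MeasurableSpace X] (ν : Measure X) [IsProbabilityMeasure ν]
    (f : X → ℝ) (hf : Measurable f) (h0 : ∀ x, 0 ≤ f x) (h1 : ∀ x, f x ≤ 1) (l : ℝ) :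
    ∫ x, Real.exp (l * (f x - ∫ y, f y ∂ν)) ∂ν ≤ Real.exp (l ^ 2 / 8) := by
  set m := ∫ y, f y ∂ν with hm
  have hfi : Integrable f ν := bdd_integrable ν hf (C := 1)
    (fun x => abs_le.2 ⟨by linarith [h0 x], h1 x⟩)
  have hm0 : 0 ≤ m := integral_nonneg h0
  have hm1 : m ≤ 1 := by
    calc m ≤ ∫ _, (1:ℝ) ∂ν := integral_mono hfi (integrable_const 1) h1
      _ = 1 := by simp
  -- pointwise convexity bound : exp (l * y) ≤ 1 - y + y * exp l for y ∈ [0,1]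
  have hconv : ∀ x, Real.exp (l * f x) ≤ 1 - f x + f x * Real.exp l := by
    intro x
    have := convexOn_exp.2 (Set.mem_univ (0:ℝ)) (Set.mem_univ l)
      (by linarith [h1 x] : (0:ℝ) ≤ 1 - f x) (h0 x) (by ring)
    simpa [smul_eq_mul, mul_comm] using this
  have hint1 : Integrable (fun x => Real.exp (l * f x)) ν := by
    refine bdd_integrable ν (by measurability) (C := Real.exp |l|) (fun x => ?_)
    rw [abs_of_pos (exp_pos _)]
    apply Real.exp_le_exp.2
    calc l * f x ≤ |l * f x| := le_abs_self _
      _ = |l| * |f x| := abs_mul _ _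
      _ ≤ |l| * 1 := by
          apply mul_le_mul_of_nonneg_left _ (abs_nonneg l)
          rw [abs_of_nonneg (h0 x)]; exact h1 x
      _ = |l| := mul_one _
  have hint2 : Integrable (fun x => 1 - f x + f x * Real.exp l) ν := by
    exact ((integrable_const 1).sub hfi).add (hfi.mul_const _)
  have step1 : ∫ x, Real.exp (l * f x) ∂ν ≤ 1 - m + m * Real.exp l := by
    calc ∫ x, Real.exp (l * f x) ∂ν ≤ ∫ x, (1 - f x + f x * Real.exp l) ∂ν :=
          integral_mono hint1 hint2 hconv
      _ = 1 - m + m * Real.exp l := by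
          have h12 : Integrable (fun x => 1 - f x) ν := (integrable_const 1).sub hfi
          rw [integral_add h12 (hfi.mul_const _), integral_mul_const,
            integral_sub (integrable_const 1) hfi, integral_const]
          simp [hm]
  have heq : ∫ x, Real.exp (l * (f x - m)) ∂ν
      = Real.exp (-(l * m)) * ∫ x, Real.exp (l * f x) ∂ν := by
    rw [← integral_const_mul]
    congr 1 with x
    rw [← Real.exp_add]; ring_nf
  rw [heq]
  calc Real.exp (-(l * m)) * ∫ x, Real.exp (l * f x) ∂ν
      ≤ Real.exp (-(l * m)) * (1 - m + m * Real.exp l) :=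
        mul_le_mul_of_nonneg_left step1 (exp_pos _).le
    _ ≤ Real.exp (l ^ 2 / 8) := hoeff_core m hm0 hm1 l

lemma one_side {X : Type*} [MeasurableSpace X] (μ : Measure X) [IsProbabilityMeasure μ]
    (f : X → ℝ) (hf : Measurable f) (h0 : ∀ x, 0 ≤ f x) (h1 : ∀ x, f x ≤ 1)
    (n : ℕ) (t : ℝ) (ht : 0 < t) :
    (Measure.pi fun _ : Fin n => μ)
        {xs | (n : ℝ) * t ≤ ∑ i, (f (xs i) - ∫ y, f y ∂μ)} ≤
      ENNReal.ofReal (Real.exp (-2 * (n : ℝ) * t ^ 2)) := by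
  letI : MeasureSpace X := ⟨μ⟩
  set P : Measure (Fin n → X) := Measure.pi fun _ : Fin n => μ with hP
  set m := ∫ y, f y ∂μ with hm
  have hm0 : 0 ≤ m := integral_nonneg h0
  have hfi : Integrable f μ :=
    bdd_integrable μ hf (C := 1) (fun x => abs_le.2 ⟨by linarith [h0 x], h1 x⟩)
  have hm1 : m ≤ 1 := by
    calc m ≤ ∫ _, (1:ℝ) ∂μ := integral_mono hfi (integrable_const 1) h1
      _ = 1 := by simp
  set S : (Fin n → X) → ℝ := fun xs => ∑ i, (f (xs i) - m) with hS
  have hSmeas : Measurable S := by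
    apply Finset.measurable_sum
    exact fun i _ => (hf.comp (measurable_pi_apply i)).sub measurable_const
  set l : ℝ := 4 * t with hl
  have hl0 : 0 ≤ l := by positivity
  have hSbd : ∀ xs, S xs ≤ n := by
    intro xs
    calc S xs ≤ ∑ _i : Fin n, (1:ℝ) := by
          apply Finset.sum_le_sum
          intro i _
          linarith [h1 (xs i)]
      _ = n := by simp
  have hint : Integrable (fun xs => Real.exp (l * S xs)) P := by
    refine bdd_integrable P (by measurability) (C := Real.exp (l * n)) (fun xs => ?_)
    rw [abs_of_pos (exp_pos _)]
    exact Real.exp_le_exp.2 (mul_le_mul_of_nonneg_left (hSbd xs) hl0)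
  have hmgf : ∫ xs, Real.exp (l * S xs) ∂P
      = (∫ x, Real.exp (l * (f x - m)) ∂μ) ^ n := by
    have heq : ∀ xs : Fin n → X,
        Real.exp (l * S xs) = ∏ i, Real.exp (l * (f (xs i) - m)) := by
      intro xs
      rw [← Real.exp_sum, hS, Finset.mul_sum]
    simp_rw [heq]
    have := MeasureTheory.integral_fintype_prod_eq_pow (ι := Fin n) (μ := μ)
      (fun x => Real.exp (l * (f x - m)))
    simpa [MeasureTheory.volume_pi, Fintype.card_fin] using this
  have hchern := ProbabilityTheory.measure_ge_le_exp_mul_mgf (μ := P) (X := S)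
    ((n : ℝ) * t) hl0 hint
  have hmgf_le : mgf S P l ≤ Real.exp (l ^ 2 / 8) ^ n := by
    have h1' : mgf S P l = (∫ x, Real.exp (l * (f x - m)) ∂μ) ^ n := hmgf
    rw [h1']
    apply pow_le_pow_left₀ (integral_nonneg (fun x => (exp_pos _).le))
    exact mgf_le_of_Icc μ f hf h0 h1 l
  have hfinal : Real.exp (-l * ((n:ℝ) * t)) * Real.exp (l ^ 2 / 8) ^ n
      = Real.exp (-2 * (n : ℝ) * t ^ 2) := by
    rw [← Real.exp_nat_mul, ← Real.exp_add, hl]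
    ring_nf
  have hle : (P {xs | (n : ℝ) * t ≤ S xs}).toReal ≤ Real.exp (-2 * (n : ℝ) * t ^ 2) := by
    calc (P {xs | (n : ℝ) * t ≤ S xs}).toReal
        ≤ Real.exp (-l * ((n:ℝ) * t)) * mgf S P l := hchern
      _ ≤ Real.exp (-l * ((n:ℝ) * t)) * Real.exp (l ^ 2 / 8) ^ n :=
          mul_le_mul_of_nonneg_left hmgf_le (exp_pos _).le
      _ = Real.exp (-2 * (n : ℝ) * t ^ 2) := hfinal
  rw [← ENNReal.le_ofReal_iff_toReal_le (measure_ne_top P _) (exp_pos _).le] at hle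
  exact hle

/-- **Uniform deviation bound for a finite hypothesis class.**
For a finite nonempty hypothesis class `H` with measurable losses `L h : X → [0,1]`,
true risk `R h = ∫ L_h dμ` and empirical risk `Remp h xs = (1/n) ∑ L_h (xs i)` on
`n` i.i.d. samples from `μ`, for every `t > 0` the probability (under the product
measure `μ^⊗n`) that some `h ∈ H` has `|R̂(h) − R(h)| > t` is at most
`2 |H| exp(−2 n t²)`. -/
theorem uniform_deviation_bound
    {X : Type*} [MeasurableSpace X] (μ : Measure X) [IsProbabilityMeasure μ]
    {H : Type*} [Fintype H] [Nonempty H]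
    (L : H → X → ℝ) (hLmeas : ∀ h, Measurable (L h))
    (hL0 : ∀ h x, 0 ≤ L h x) (hL1 : ∀ h x, L h x ≤ 1)
    (n : ℕ) (hn : 1 ≤ n)
    (R : H → ℝ) (hR : ∀ h, R h = ∫ x, L h x ∂μ)
    (Remp : H → (Fin n → X) → ℝ)
    (hRemp : ∀ h xs, Remp h xs = (1 / (n : ℝ)) * ∑ i, L h (xs i))
    (t : ℝ) (ht : 0 < t) :
    (Measure.pi fun _ : Fin n => μ) {xs | ∃ h : H, |Remp h xs - R h| > t} ≤
      ENNReal.ofReal (2 * (Fintype.card H : ℝ) * Real.exp (-2 * (n : ℝ) * t ^ 2)) := by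
  set P : Measure (Fin n → X) := Measure.pi fun _ : Fin n => μ with hP
  set e : ENNReal := ENNReal.ofReal (Real.exp (-2 * (n : ℝ) * t ^ 2)) with he
  have hnpos : (0 : ℝ) < n := by exact_mod_cast hn
  set A : H → Set (Fin n → X) :=
    fun h => {xs | (n : ℝ) * t ≤ ∑ i, (L h (xs i) - ∫ y, L h y ∂μ)} with hA
  set B : H → Set (Fin n → X) :=
    fun h => {xs | (n : ℝ) * t ≤ ∑ i, ((1 - L h (xs i)) - ∫ y, (1 - L h y) ∂μ)} with hB
  have hIntL : ∀ h, Integrable (L h) μ := fun h =>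
    bdd_integrable μ (hLmeas h) (C := 1) (fun x => abs_le.2 ⟨by linarith [hL0 h x], hL1 h x⟩)
  have hIone : ∀ h, ∫ y, (1 - L h y) ∂μ = 1 - R h := by
    intro h
    rw [integral_sub (integrable_const 1) (hIntL h), integral_const]
    simp [hR h]
  have hincl : {xs | ∃ h : H, |Remp h xs - R h| > t} ⊆ ⋃ h : H, A h ∪ B h := by
    intro xs hxs
    obtain ⟨h, hh⟩ := hxs
    apply Set.mem_iUnion.2 ⟨h, ?_⟩
    have hsum : Remp h xs - R h = (1 / (n:ℝ)) * (∑ i, L h (xs i)) - R h := by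
      rw [hRemp h xs]
    rcases lt_abs.1 hh with hcase | hcase
    · left
      show (n : ℝ) * t ≤ ∑ i, (L h (xs i) - ∫ y, L h y ∂μ)
      have hsum2 : ∑ i, (L h (xs i) - ∫ y, L h y ∂μ)
          = (∑ i, L h (xs i)) - (n : ℝ) * R h := by
        rw [Finset.sum_sub_distrib, Finset.sum_const]
        simp [hR h, mul_comm]
      rw [hsum2]
      rw [hsum] at hcase
      have h2 := mul_lt_mul_of_pos_left hcase hnpos
      have h3 : (n:ℝ) * (1 / (n:ℝ) * ∑ i, L h (xs i)) = ∑ i, L h (xs i) := by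
        field_simp
      rw [mul_sub, h3] at h2
      linarith
    · right
      show (n : ℝ) * t ≤ ∑ i, ((1 - L h (xs i)) - ∫ y, (1 - L h y) ∂μ)
      have hsum2 : ∑ i, ((1 - L h (xs i)) - ∫ y, (1 - L h y) ∂μ)
          = (n : ℝ) * R h - ∑ i, L h (xs i) := by
        rw [Finset.sum_sub_distrib, Finset.sum_sub_distrib, Finset.sum_const,
          Finset.sum_const]
        simp [hIone h]
        ring
      rw [hsum2]
      rw [hsum] at hcase
      have h2 := mul_lt_mul_of_pos_left hcase hnpos
      have h3 : (n:ℝ) * (1 / (n:ℝ) * ∑ i, L h (xs i)) = ∑ i, L h (xs i) := by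
        field_simp
      rw [mul_neg, mul_sub, h3] at h2
      linarith
  have hAle : ∀ h, P (A h) ≤ e := fun h =>
    one_side μ (L h) (hLmeas h) (hL0 h) (hL1 h) n t ht
  have hBle : ∀ h, P (B h) ≤ e := fun h =>
    one_side μ (fun x => 1 - L h x) (measurable_const.sub (hLmeas h))
      (fun x => by show (0:ℝ) ≤ 1 - L h x; linarith [hL1 h x])
      (fun x => by show 1 - L h x ≤ 1; linarith [hL0 h x]) n t ht
  calc P {xs | ∃ h : H, |Remp h xs - R h| > t}
      ≤ P (⋃ h : H, A h ∪ B h) := measure_mono hincl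
    _ ≤ ∑' h : H, P (A h ∪ B h) := measure_iUnion_le _
    _ = ∑ h : H, P (A h ∪ B h) := tsum_fintype _
    _ ≤ ∑ _h : H, (e + e) := Finset.sum_le_sum (fun h _ =>
        (measure_union_le _ _).trans (add_le_add (hAle h) (hBle h)))
    _ = (Fintype.card H) • (e + e) := by rw [Finset.sum_const, Finset.card_univ]
    _ = ENNReal.ofReal (2 * (Fintype.card H : ℝ) * Real.exp (-2 * (n : ℝ) * t ^ 2)) := by
        rw [he, nsmul_eq_mul, ← two_mul]
        rw [show (2 : ℝ) * (Fintype.card H : ℝ) * Real.exp (-2 * (n : ℝ) * t ^ 2)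
          = (Fintype.card H : ℝ) * (2 * Real.exp (-2 * (n : ℝ) * t ^ 2)) by ring]
        rw [ENNReal.ofReal_mul (by positivity), ENNReal.ofReal_mul (by norm_num : (0:ℝ) ≤ 2)]
        rw [ENNReal.ofReal_natCast, ENNReal.ofReal_ofNat]
end

section
/- (Two-Factor Generalization Bound, Theorem 1.) Let H be a finite nonempty hypothesis class with losses L_h : X → [0,1], μ a probability measure on X, R(h) the true risk and R̂(h) the empirical risk on n i.i.d. samples from μ. Then for every δ ∈ (0,1), with probability at least 1 − δ over the i.i.d. draw of the n samples, every h ∈ H satisfies R(h) ≤ R̂(h) + sqrt( 2·(ln|H| + ln(2/δ)) / n ). -/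
open MeasureTheory

private lemma tfgb_integrable_of_bounded {X : Type*} [MeasurableSpace X] (μ : Measure X)
    [IsFiniteMeasure μ] {f : X → ℝ} (hm : Measurable f) {C : ℝ} (hC : ∀ x, |f x| ≤ C) :
    Integrable f μ :=
  (integrable_const C).mono' hm.aestronglyMeasurable
    (Filter.Eventually.of_forall fun x => by simpa using hC x)

private lemma tfgb_exp_le (t z : ℝ) (hz : |z| ≤ 1) :
    Real.exp (t * z) ≤ Real.cosh t + z * Real.sinh t := by
  obtain ⟨hz1, hz2⟩ := abs_le.mp hz
  have ha : (0:ℝ) ≤ (1 - z) / 2 := by linarith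
  have hb : (0:ℝ) ≤ (1 + z) / 2 := by linarith
  have hab : (1 - z) / 2 + (1 + z) / 2 = (1:ℝ) := by ring
  have h := convexOn_exp.2 (Set.mem_univ (-t)) (Set.mem_univ t) ha hb hab
  simp only [smul_eq_mul] at h
  have he : (1 - z) / 2 * (-t) + (1 + z) / 2 * t = t * z := by ring
  rw [he] at h
  rw [Real.cosh_eq, Real.sinh_eq]
  calc Real.exp (t * z) ≤ (1 - z) / 2 * Real.exp (-t) + (1 + z) / 2 * Real.exp t := h
    _ = (Real.exp t + Real.exp (-t)) / 2 + z * ((Real.exp t - Real.exp (-t)) / 2) := by ring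

/-- mgf bound for a centered variable bounded by 1. -/
private lemma tfgb_mgf_le {X : Type*} [MeasurableSpace X] (μ : Measure X)
    [IsProbabilityMeasure μ] {g : X → ℝ} (hm : Measurable g) (hb : ∀ x, |g x| ≤ 1)
    (hmean : ∫ x, g x ∂μ = 0) (t : ℝ) :
    ∫ x, Real.exp (t * g x) ∂μ ≤ Real.exp (t ^ 2 / 2) := by
  have hgint : Integrable g μ := tfgb_integrable_of_bounded μ hm hb
  have hint1 : Integrable (fun x => Real.exp (t * g x)) μ := by
    refine tfgb_integrable_of_bounded μ ((Real.measurable_exp).comp (measurable_const.mul hm))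
      (C := Real.exp |t|) fun x => ?_
    rw [abs_of_nonneg (Real.exp_nonneg _)]
    apply Real.exp_le_exp.mpr
    calc t * g x ≤ |t * g x| := le_abs_self _
      _ = |t| * |g x| := abs_mul _ _
      _ ≤ |t| * 1 := by gcongr; exact hb x
      _ = |t| := mul_one _
  have hint2 : Integrable (fun x => Real.cosh t + g x * Real.sinh t) μ :=
    (integrable_const _).add (hgint.mul_const _)
  calc ∫ x, Real.exp (t * g x) ∂μ
      ≤ ∫ x, (Real.cosh t + g x * Real.sinh t) ∂μ :=
        integral_mono hint1 hint2 fun x => tfgb_exp_le t (g x) (hb x)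
    _ = Real.cosh t + (∫ x, g x ∂μ) * Real.sinh t := by
        rw [integral_add (integrable_const _) (hgint.mul_const _), integral_const,
          integral_mul_const]
        simp
    _ = Real.cosh t := by rw [hmean]; ring
    _ ≤ Real.exp (t ^ 2 / 2) := Real.cosh_le_exp_half_sq t

/-- Fubini: the integral of `exp (t * ∑ g (xs i))` over the product measure is a power. -/
private lemma tfgb_integral_pow {X : Type*} [m0 : MeasurableSpace X] (μ : Measure X)
    [IsProbabilityMeasure μ] (n : ℕ) (g : X → ℝ) (hm : Measurable g) (t : ℝ) :
    ∫ xs : Fin n → X, Real.exp (t * ∑ i, g (xs i)) ∂(Measure.pi fun _ : Fin n => μ)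
      = (∫ x, Real.exp (t * g x) ∂μ) ^ n := by
  letI : MeasureSpace X := { volume := μ }
  haveI : SigmaFinite (volume : Measure X) := by
    show SigmaFinite μ; infer_instance
  have h1 : ∀ xs : Fin n → X, Real.exp (t * ∑ i, g (xs i)) = ∏ i, Real.exp (t * g (xs i)) := by
    intro xs
    rw [Finset.mul_sum, Real.exp_sum]
  have h2 : (Measure.pi fun _ : Fin n => μ) = (volume : Measure (Fin n → X)) := rfl
  rw [h2]
  simp_rw [h1]
  have := MeasureTheory.integral_fintype_prod_volume_eq_pow (𝕜 := ℝ) (ι := Fin n)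
    (fun x : X => Real.exp (t * g x))
  rw [Fintype.card_fin] at this
  exact this

/-- Chernoff–Hoeffding bound for the sum of i.i.d. centered bounded variables. -/
private lemma tfgb_chernoff {X : Type*} [MeasurableSpace X] (μ : Measure X)
    [IsProbabilityMeasure μ] (n : ℕ) {g : X → ℝ} (hm : Measurable g) (hb : ∀ x, |g x| ≤ 1)
    (hmean : ∫ x, g x ∂μ = 0) {ε : ℝ} (hε : 0 ≤ ε) :
    (Measure.pi fun _ : Fin n => μ) {xs | (n : ℝ) * ε ≤ ∑ i, g (xs i)}
      ≤ ENNReal.ofReal (Real.exp (-((n : ℝ) * ε ^ 2 / 2))) := by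
  haveI : IsProbabilityMeasure (Measure.pi fun _ : Fin n => μ) := by infer_instance
  set ν := Measure.pi fun _ : Fin n => μ with hν
  set S : (Fin n → X) → ℝ := fun xs => ∑ i, g (xs i) with hS
  have hSmeas : Measurable S := Finset.measurable_sum _ fun i _ =>
    hm.comp (measurable_pi_apply i)
  have hint : Integrable (fun xs => Real.exp (ε * S xs)) ν := by
    refine tfgb_integrable_of_bounded ν
      ((Real.measurable_exp).comp (measurable_const.mul hSmeas))
      (C := Real.exp (ε * n)) fun xs => ?_
    rw [abs_of_nonneg (Real.exp_nonneg _)]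
    apply Real.exp_le_exp.mpr
    have : S xs ≤ (n : ℝ) := by
      calc S xs ≤ ∑ i : Fin n, (1 : ℝ) := Finset.sum_le_sum fun i _ => (abs_le.mp (hb _)).2
        _ = (n : ℝ) := by simp
    nlinarith
  have hmarkov := ProbabilityTheory.measure_ge_le_exp_mul_mgf (μ := ν) (X := S)
    ((n : ℝ) * ε) hε hint
  have hmgf : ProbabilityTheory.mgf S ν ε ≤ Real.exp (ε ^ 2 / 2) ^ n := by
    unfold ProbabilityTheory.mgf
    rw [show (∫ xs, Real.exp (ε * S xs) ∂ν)
        = (∫ x, Real.exp (ε * g x) ∂μ) ^ n from tfgb_integral_pow μ n g hm ε]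
    exact pow_le_pow_left₀ (integral_nonneg fun x => Real.exp_nonneg _)
      (tfgb_mgf_le μ hm hb hmean ε) n
  have hfin : ν {xs | (n : ℝ) * ε ≤ S xs} ≠ ⊤ := measure_ne_top _ _
  have hbound : (ν {xs | (n : ℝ) * ε ≤ S xs}).toReal
      ≤ Real.exp (-((n : ℝ) * ε ^ 2 / 2)) := by
    calc (ν {xs | (n : ℝ) * ε ≤ S xs}).toReal
        ≤ Real.exp (-ε * ((n : ℝ) * ε)) * ProbabilityTheory.mgf S ν ε := hmarkov
      _ ≤ Real.exp (-ε * ((n : ℝ) * ε)) * Real.exp (ε ^ 2 / 2) ^ n := by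
          gcongr
      _ = Real.exp (-((n : ℝ) * ε ^ 2 / 2)) := by
          rw [← Real.exp_nat_mul, ← Real.exp_add]
          ring_nf
  calc ν {xs | (n : ℝ) * ε ≤ S xs}
      = ENNReal.ofReal ((ν {xs | (n : ℝ) * ε ≤ S xs}).toReal) := by
        rw [ENNReal.ofReal_toReal hfin]
    _ ≤ ENNReal.ofReal (Real.exp (-((n : ℝ) * ε ^ 2 / 2))) := ENNReal.ofReal_le_ofReal hbound

/-- **Two-Factor Generalization Bound (Theorem 1).**
For a finite nonempty hypothesis class `H` with measurable losses `L h : X → [0,1]`,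
true risk `R h = ∫ L_h dμ` and empirical risk `Remp h xs = (1/n) ∑ L_h (xs i)` on
`n` i.i.d. samples from `μ`, for every `δ ∈ (0,1)`, with probability at least `1 − δ`
over the i.i.d. draw of the samples, every `h ∈ H` satisfies
`R(h) ≤ R̂(h) + sqrt(2 (ln|H| + ln(2/δ)) / n)`. -/
theorem two_factor_generalization_bound
    {X : Type*} [MeasurableSpace X] (μ : Measure X) [IsProbabilityMeasure μ]
    {H : Type*} [Fintype H] [Nonempty H]
    (L : H → X → ℝ) (hLmeas : ∀ h, Measurable (L h))
    (hL0 : ∀ h x, 0 ≤ L h x) (hL1 : ∀ h x, L h x ≤ 1)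
    (n : ℕ) (hn : 1 ≤ n)
    (R : H → ℝ) (hR : ∀ h, R h = ∫ x, L h x ∂μ)
    (Remp : H → (Fin n → X) → ℝ)
    (hRemp : ∀ h xs, Remp h xs = (1 / (n : ℝ)) * ∑ i, L h (xs i))
    (δ : ℝ) (hδ0 : 0 < δ) (hδ1 : δ < 1) :
    ENNReal.ofReal (1 - δ) ≤
      (Measure.pi fun _ : Fin n => μ)
        {xs | ∀ h : H,
          R h ≤ Remp h xs +
            Real.sqrt (2 * (Real.log (Fintype.card H : ℝ) + Real.log (2 / δ)) / (n : ℝ))} := by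
  classical
  set ν := Measure.pi fun _ : Fin n => μ with hν
  haveI : IsProbabilityMeasure ν := by rw [hν]; infer_instance
  set M : ℕ := Fintype.card H with hM
  have hM1 : 1 ≤ M := Fintype.card_pos
  have hMR : (1 : ℝ) ≤ (M : ℝ) := by exact_mod_cast hM1
  have hnpos : (0 : ℝ) < (n : ℝ) := by exact_mod_cast hn
  set A : ℝ := Real.log (M : ℝ) + Real.log (2 / δ) with hA
  have hlogM : 0 ≤ Real.log (M : ℝ) := Real.log_nonneg hMR
  have hlog2δ : 0 < Real.log (2 / δ) := Real.log_pos (by rw [lt_div_iff₀ hδ0]; linarith)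
  have hApos : 0 < A := by positivity
  set ε : ℝ := Real.sqrt (2 * A / (n : ℝ)) with hε
  have hεnn : 0 ≤ ε := Real.sqrt_nonneg _
  have hεsq : ε ^ 2 = 2 * A / (n : ℝ) := Real.sq_sqrt (by positivity)
  -- per-hypothesis facts
  have hLint : ∀ h, Integrable (L h) μ := fun h =>
    tfgb_integrable_of_bounded μ (hLmeas h) (C := 1) fun x =>
      abs_le.mpr ⟨by linarith [hL0 h x], hL1 h x⟩
  have hR0 : ∀ h, 0 ≤ R h := fun h => by
    rw [hR h]; exact integral_nonneg fun x => hL0 h x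
  have hR1 : ∀ h, R h ≤ 1 := fun h => by
    rw [hR h]
    calc ∫ x, L h x ∂μ ≤ ∫ x, (1 : ℝ) ∂μ :=
          integral_mono (hLint h) (integrable_const _) (fun x => hL1 h x)
      _ = 1 := by simp
  set g : H → X → ℝ := fun h x => R h - L h x with hg
  have hgmeas : ∀ h, Measurable (g h) := fun h => measurable_const.sub (hLmeas h)
  have hgb : ∀ h x, |g h x| ≤ 1 := fun h x =>
    abs_le.mpr ⟨by simp only [hg]; linarith [hR0 h, hL1 h x], by
      simp only [hg]; linarith [hR1 h, hL0 h x]⟩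
  have hgmean : ∀ h, ∫ x, g h x ∂μ = 0 := fun h => by
    simp only [hg]
    rw [integral_sub (integrable_const _) (hLint h), integral_const, ← hR h]
    simp
  -- bad events
  set Bad : H → Set (Fin n → X) := fun h => {xs | (n : ℝ) * ε ≤ ∑ i, g h (xs i)} with hBad
  have hBadle : ∀ h, ν (Bad h) ≤ ENNReal.ofReal (Real.exp (-((n : ℝ) * ε ^ 2 / 2))) :=
    fun h => tfgb_chernoff μ n (hgmeas h) (hgb h) (hgmean h) hεnn
  have hexpA : Real.exp (-((n : ℝ) * ε ^ 2 / 2)) = (1 / (M : ℝ)) * (δ / 2) := by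
    have : (n : ℝ) * ε ^ 2 / 2 = A := by
      rw [hεsq]; field_simp
    rw [this, hA, neg_add, Real.exp_add, Real.exp_neg, Real.exp_log (by positivity),
      Real.exp_neg, Real.exp_log (by positivity)]
    field_simp
  -- the good set and its complement
  set c : ℝ := Real.sqrt (2 * (Real.log (Fintype.card H : ℝ) + Real.log (2 / δ)) / (n : ℝ))
    with hc
  have hcε : c = ε := rfl
  set G : Set (Fin n → X) := {xs | ∀ h : H, R h ≤ Remp h xs + c} with hG
  have hGmeas : MeasurableSet G := by
    have : G = ⋂ h : H, {xs : Fin n → X | R h ≤ (1 / (n : ℝ)) * ∑ i, L h (xs i) + c} := by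
      ext xs; simp only [hG, Set.mem_setOf_eq, Set.mem_iInter, hRemp]
    rw [this]
    refine MeasurableSet.iInter fun h => ?_
    refine measurableSet_le measurable_const ?_
    exact ((Finset.measurable_sum _ fun i _ =>
      (hLmeas h).comp (measurable_pi_apply i)).const_mul _).add_const _
  have hsub : Gᶜ ⊆ ⋃ h : H, Bad h := by
    intro xs hxs
    simp only [hG, Set.mem_compl_iff, Set.mem_setOf_eq, not_forall] at hxs
    obtain ⟨h, hh⟩ := hxs
    push_neg at hh
    refine Set.mem_iUnion.mpr ⟨h, ?_⟩
    simp only [hBad, Set.mem_setOf_eq]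
    have hsum : ∑ i, g h (xs i) = (n : ℝ) * (R h - Remp h xs) := by
      simp only [hg, hRemp]
      rw [Finset.sum_sub_distrib, Finset.sum_const]
      simp only [Finset.card_univ, Fintype.card_fin, nsmul_eq_mul]
      field_simp
    rw [hsum, hcε] at *
    have : ε < R h - Remp h xs := by linarith
    calc (n : ℝ) * ε ≤ (n : ℝ) * (R h - Remp h xs) := by
          apply mul_le_mul_of_nonneg_left (le_of_lt this) (le_of_lt hnpos)
      _ = (n : ℝ) * (R h - Remp h xs) := rfl
  have hbadbound : ν Gᶜ ≤ ENNReal.ofReal δ := by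
    calc ν Gᶜ ≤ ν (⋃ h : H, Bad h) := measure_mono hsub
      _ ≤ ∑ h : H, ν (Bad h) := measure_iUnion_fintype_le _ _
      _ ≤ ∑ _h : H, ENNReal.ofReal (Real.exp (-((n : ℝ) * ε ^ 2 / 2))) :=
          Finset.sum_le_sum fun h _ => hBadle h
      _ = (M : ℕ) • ENNReal.ofReal ((1 / (M : ℝ)) * (δ / 2)) := by
          rw [Finset.sum_const, hexpA]; simp [hM]
      _ = ENNReal.ofReal ((M : ℝ) * ((1 / (M : ℝ)) * (δ / 2))) := by
          rw [nsmul_eq_mul, ← ENNReal.ofReal_natCast, ← ENNReal.ofReal_mul (by positivity)]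
      _ = ENNReal.ofReal (δ / 2) := by
          congr 1
          field_simp
      _ ≤ ENNReal.ofReal δ := ENNReal.ofReal_le_ofReal (by linarith)
  have hfinal : ENNReal.ofReal (1 - δ) ≤ ν G := by
    have hGc : ν G = 1 - ν Gᶜ := by
      rw [← prob_compl_eq_one_sub hGmeas.compl, compl_compl]
    rw [hGc, ENNReal.ofReal_sub _ (le_of_lt hδ0)]
    simp only [ENNReal.ofReal_one]
    exact tsub_le_tsub_left hbadbound 1
  exact hfinal
end
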